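/- Let n ≥ 3 and let q be a 2-solvable pebble distribution on the cycle C_n of size n − 1 such that q(u) ≤ 2 for every vertex u. Then every unoccupied vertex v (a vertex with q(v) = 0) has two distinct friends each of which carries exactly two pebbles, where two distinct vertices are friends if every internal vertex of one of the two paths in C_n joining them is occupied (carries at least one pebble). -/

import Mathlib

open SimpleGraph

/-- A single rubbling move on `G`: either a pebbling move (remove two pebbles at `v`,
add one at an adjacent vertex `u`) or a strict rubbling move (remove one pebble each at
distinct `v` and `w`, both adjacent to `u`, and add one pebble at `u`). -/
def RubblingStep {V : Type*} [DecidableEq V] (G : SimpleGraph V) (p q : V → ℕ) : Prop :=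
  (∃ v u, G.Adj v u ∧ 2 ≤ p v ∧
      q = fun x => if x = v then p x - 2 else if x = u then p x + 1 else p x) ∨
  (∃ v w u, v ≠ w ∧ G.Adj v u ∧ G.Adj w u ∧ 1 ≤ p v ∧ 1 ≤ p w ∧
      q = fun x => if x = v then p x - 1 else if x = w then p x - 1
          else if x = u then p x + 1 else p x)

/-- `q` is obtainable from `p` by an executable rubbling sequence. -/
def RubblingReach {V : Type*} [DecidableEq V] (G : SimpleGraph V) : (V → ℕ) → (V → ℕ) → Prop :=
  Relation.ReflTransGen (RubblingStep G)

/-- The vertex `u` is `k`-reachable from the distribution `p`. -/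
def KReachable {V : Type*} [DecidableEq V] (G : SimpleGraph V) (p : V → ℕ) (u : V) (k : ℕ) : Prop :=
  ∃ q, RubblingReach G p q ∧ k ≤ q u

/-- `p` is solvable: every vertex is reachable. -/
def Solvable {V : Type*} [DecidableEq V] (G : SimpleGraph V) (p : V → ℕ) : Prop :=
  ∀ u, KReachable G p u 1

/-- The optimal rubbling number: the minimum size of a solvable distribution. -/
noncomputable def optRub {V : Type*} [DecidableEq V] [Fintype V] (G : SimpleGraph V) : ℕ :=
  sInf {m | ∃ p : V → ℕ, Solvable G p ∧ ∑ v, p v = m}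

/-- Two distinct vertices are friends under `q` if all internal vertices of some path
joining them are occupied. -/
def Friends {V : Type*} (G : SimpleGraph V) (q : V → ℕ) (v w : V) : Prop :=
  v ≠ w ∧ ∃ P : G.Walk v w, P.IsPath ∧ ∀ u ∈ P.support, u ≠ v → u ≠ w → 1 ≤ q u

/-!
Fix the unoccupied vertex `v` and read the two arcs of `C_n` leaving `v` through `u ↦ u - v` and
`u ↦ v - u`. On each arc a vertex at distance `i` from `v` gets weight `2 ^ (n - i)`, so that a
neighbour of `v` weighs `M = 2 ^ (n - 1)`. A move not onto `v` raises a weighted sum only if it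
spends pebbles of `v`, and then by at most `M`; a move onto `v` lowers the two sums by `2M` in
total. Hence `2 p(v) + ⌊W₊ / M⌋ + ⌊W₋ / M⌋` never increases, and it is at least `4` once `v`
carries two pebbles.

With at most two pebbles per vertex, `⌊W / M⌋` is at most one more than the number of vertices
with two pebbles that precede the first empty vertex of the arc, and these are exactly the
two-pebble friends of `v` on that arc. So the two arcs provide two such friends; they are distinct,
since a common one would force every vertex but `v` to be occupied, one of them twice, i.e. `n`
pebbles.
-/

open Finset
open Fin.CommRing

theorem Nat.div_le_div_add_of_le_add_mul {a b k M : ℕ} (hM : 0 < M) (h : a ≤ b + M * k) :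
    a / M ≤ b / M + k :=
  (Nat.div_le_div_right h).trans_eq (Nat.add_mul_div_left b k hM)

theorem Nat.div_add_le_div_of_add_mul_le {a b k M : ℕ} (hM : 0 < M) (h : a + M * k ≤ b) :
    a / M + k ≤ b / M :=
  (Nat.add_mul_div_left a k hM).symm.trans_le (Nat.div_le_div_right h)

section Move

variable {V : Type*} [DecidableEq V] {G : SimpleGraph V} {p p' : V → ℕ}

theorem RubblingStep.exists_move (h : RubblingStep G p p') :
    ∃ x y u, G.Adj x u ∧ G.Adj y u ∧ ∀ w,
      p' w + (if w = x then 1 else 0) + (if w = y then 1 else 0) =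
        p w + (if w = u then 1 else 0) := by
  rcases h with ⟨x, u, hxu, hx, rfl⟩ | ⟨x, y, u, hxy, hxu, hyu, hx, hy, rfl⟩
  · refine ⟨x, x, u, hxu, hxu, fun w => ?_⟩
    have := hxu.ne
    beta_reduce
    split_ifs <;> subst_vars <;> first | contradiction | omega
  · refine ⟨x, y, u, hxu, hyu, fun w => ?_⟩
    have := hxu.ne
    have := hyu.ne
    beta_reduce
    split_ifs <;> subst_vars <;> first | contradiction | omega

theorem sum_mul_add_of_move [Fintype V] {x y u : V}
    (h : ∀ w, p' w + (if w = x then 1 else 0) + (if w = y then 1 else 0) =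
      p w + (if w = u then 1 else 0)) (c : V → ℕ) :
    ∑ w, p' w * c w + c x + c y = ∑ w, p w * c w + c u := by
  have := Finset.sum_congr rfl fun w (_ : w ∈ (univ : Finset V)) => congrArg (· * c w) (h w)
  simpa [add_mul, Finset.sum_add_distrib, ite_mul, add_assoc] using this

end Move

section Walks

variable {V : Type*} {G : SimpleGraph V}

theorem exists_walk_of_chain (f : ℕ → V) (k : ℕ) (hf : ∀ j < k, G.Adj (f j) (f (j + 1))) :
    ∃ W : G.Walk (f 0) (f k), ∀ u ∈ W.support, ∃ j ≤ k, f j = u := by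
  induction k with
  | zero => exact ⟨.nil, by simp⟩
  | succ k ih =>
    obtain ⟨W, hW⟩ := ih fun j hj => hf j (by omega)
    refine ⟨W.concat (hf k (by omega)), fun u hu => ?_⟩
    rw [Walk.support_concat, List.mem_append, List.mem_singleton] at hu
    rcases hu with hu | rfl
    · obtain ⟨j, hj, rfl⟩ := hW u hu
      exact ⟨j, by omega, rfl⟩
    · exact ⟨k + 1, le_rfl, rfl⟩

theorem friends_of_walk [DecidableEq V] {q : V → ℕ} {v w : V} (hvw : v ≠ w) (W : G.Walk v w)
    (hW : ∀ u ∈ W.support, u ≠ v → u ≠ w → 1 ≤ q u) : Friends G q v w :=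
  ⟨hvw, W.bypass, W.bypass_isPath, fun u hu => hW u (W.support_bypass_subset_support hu)⟩

end Walks

section CycleWeights

variable {n : ℕ}

def cycleGraph.subRight (v : Fin (n + 2)) : cycleGraph (n + 2) ≃g cycleGraph (n + 2) where
  toEquiv := Equiv.subRight v
  map_rel_iff' := by simp [cycleGraph_adj]

def cycleGraph.subLeft (v : Fin (n + 2)) : cycleGraph (n + 2) ≃g cycleGraph (n + 2) where
  toEquiv := Equiv.subLeft v
  map_rel_iff' := by simp [cycleGraph_adj, or_comm]

@[simp]
theorem cycleGraph.subRight_symm_apply (v u : Fin (n + 2)) :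
    (cycleGraph.subRight v).symm u = u + v := rfl

@[simp]
theorem cycleGraph.subLeft_symm_apply (v u : Fin (n + 2)) :
    (cycleGraph.subLeft v).symm u = v - u :=
  neg_add_eq_sub u v

theorem cycleGraph.adj_natCast_succ (j : ℕ) :
    (cycleGraph (n + 2)).Adj (j : Fin (n + 2)) ((j + 1 : ℕ) : Fin (n + 2)) :=
  cycleGraph_adj.2 <| Or.inr <| by push_cast; ring

theorem Fin.natCast_succ_ne_zero {i : ℕ} (hi : i < n + 2) :
    ((i + 1 : ℕ) : Fin (n + 3)) ≠ 0 := by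
  rw [Ne, Fin.ext_iff, Fin.val_natCast, Nat.mod_eq_of_lt (by omega)]
  simp

def arcWeight (i : Fin (n + 3)) : ℕ := if i = 0 then 0 else 2 ^ (n + 3 - i)

theorem arcWeight_zero : arcWeight (0 : Fin (n + 3)) = 0 := if_pos rfl

theorem arcWeight_le (i : Fin (n + 3)) : arcWeight i ≤ 2 ^ (n + 2) := by
  unfold arcWeight
  split_ifs with hi
  · exact Nat.zero_le _
  · have : 1 ≤ i.val := Nat.one_le_iff_ne_zero.2 (Fin.val_ne_iff.2 hi)
    exact Nat.pow_le_pow_right two_pos (by omega)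

theorem arcWeight_one : arcWeight (1 : Fin (n + 3)) = 2 ^ (n + 2) := by
  simp [arcWeight]

theorem arcWeight_natCast_succ {i : ℕ} (hi : i < n + 2) :
    arcWeight ((i + 1 : ℕ) : Fin (n + 3)) = 2 ^ (n + 2 - i) := by
  rw [arcWeight, if_neg (Fin.natCast_succ_ne_zero hi), Fin.val_natCast, Nat.mod_eq_of_lt (by omega)]
  congr 1
  omega

theorem arcWeight_eq_two_mul {i : Fin (n + 3)} (hi : i ≠ 0) (hi' : i + 1 ≠ 0) :
    arcWeight i = 2 * arcWeight (i + 1) := by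
  have hlast : i < Fin.last (n + 2) := by
    refine lt_of_le_of_ne (Fin.le_last i) fun h => hi' ?_
    subst h
    exact Fin.last_add_one _
  have h1 : 1 ≤ i.val := Nat.one_le_iff_ne_zero.2 (Fin.val_ne_iff.2 hi)
  have h2 : i.val < n + 2 := hlast
  rw [arcWeight, arcWeight, if_neg hi, if_neg hi', Fin.val_add_one_of_lt hlast, ← pow_succ']
  congr 1
  omega

theorem arcWeight_le_add {i j k : Fin (n + 3)} (hi : i ≠ 0) (hj : j ≠ 0)
    (hik : (cycleGraph (n + 3)).Adj i k) (hjk : (cycleGraph (n + 3)).Adj j k) :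
    arcWeight k ≤ arcWeight i + arcWeight j := by
  by_cases hk : k = 0
  · simp [hk, arcWeight_zero]
  rw [cycleGraph_adj, sub_eq_iff_eq_add', sub_eq_iff_eq_add'] at hik hjk
  rcases hik with rfl | rfl
  · rcases hjk with rfl | rfl
    · rw [arcWeight_eq_two_mul hk hi]
      omega
    · rw [arcWeight_eq_two_mul hj hk]
      omega
  · rw [arcWeight_eq_two_mul hi hk]
    omega

theorem sum_fin_succ_eq_add_sum_range {m : ℕ} (g : Fin (m + 1) → ℕ) :
    ∑ i, g i = g 0 + ∑ i ∈ range m, g ((i + 1 : ℕ) : Fin (m + 1)) := by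
  rw [Fin.sum_univ_succ, ← Fin.sum_univ_eq_sum_range (fun i => g ((i + 1 : ℕ) : Fin (m + 1)))]
  congr 1
  refine Finset.sum_congr rfl fun i _ => congrArg g ?_
  ext
  simp

end CycleWeights

section Potential

variable {n : ℕ}

def arcWeightSum (e : cycleGraph (n + 3) ≃g cycleGraph (n + 3)) (p : Fin (n + 3) → ℕ) : ℕ :=
  ∑ u, p u * arcWeight (e u)

variable {e : cycleGraph (n + 3) ≃g cycleGraph (n + 3)} {p p' : Fin (n + 3) → ℕ}
  {x y u v : Fin (n + 3)}

theorem arcWeightSum_add_le_of_move_to (he : e v = 0)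
    (h : ∀ w, p' w + (if w = x then 1 else 0) + (if w = y then 1 else 0) =
      p w + (if w = v then 1 else 0)) :
    arcWeightSum e p' + 2 ^ (n + 2) * ((if e x = 1 then 1 else 0) + (if e y = 1 then 1 else 0)) ≤
      arcWeightSum e p := by
  have hsum := sum_mul_add_of_move h fun w => arcWeight (e w)
  rw [he, arcWeight_zero] at hsum
  have hx : 2 ^ (n + 2) * (if e x = 1 then 1 else 0) ≤ arcWeight (e x) := by
    split_ifs with hx <;> simp [hx, arcWeight_one]
  have hy : 2 ^ (n + 2) * (if e y = 1 then 1 else 0) ≤ arcWeight (e y) := by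
    split_ifs with hy <;> simp [hy, arcWeight_one]
  unfold arcWeightSum
  rw [mul_add]
  omega

theorem arcWeightSum_le_of_move_away (he : e v = 0) (hx : (cycleGraph (n + 3)).Adj x u)
    (hy : (cycleGraph (n + 3)).Adj y u)
    (h : ∀ w, p' w + (if w = x then 1 else 0) + (if w = y then 1 else 0) =
      p w + (if w = u then 1 else 0)) :
    arcWeightSum e p' ≤
      arcWeightSum e p + 2 ^ (n + 2) * ((if v = x then 1 else 0) + (if v = y then 1 else 0)) := by
  have hsum := sum_mul_add_of_move h fun w => arcWeight (e w)
  have hu := arcWeight_le (e u)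
  unfold arcWeightSum
  by_cases hsrc : v = x ∨ v = y
  · have : 2 ^ (n + 2) ≤ 2 ^ (n + 2) * ((if v = x then 1 else 0) + (if v = y then 1 else 0)) :=
      Nat.le_mul_of_pos_right _ (by rcases hsrc with hsrc | hsrc <;> simp [hsrc])
    omega
  obtain ⟨hxv, hyv⟩ := not_or.1 hsrc
  have hex : e x ≠ 0 := fun h => hxv (e.injective (he.trans h.symm))
  have hey : e y ≠ 0 := fun h => hyv (e.injective (he.trans h.symm))
  have := arcWeight_le_add hex hey (e.map_adj_iff.2 hx) (e.map_adj_iff.2 hy)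
  omega

theorem indicator_subRight_add_indicator_subLeft (hx : (cycleGraph (n + 3)).Adj x v) :
    (if cycleGraph.subRight v x = 1 then 1 else 0) +
      (if cycleGraph.subLeft v x = 1 then 1 else 0) = 1 := by
  have h2 : (1 : Fin (n + 3)) + 1 ≠ 0 := by
    rw [Ne, Fin.ext_iff, Fin.val_add, Fin.val_one]
    simp [Nat.mod_eq_of_lt (show 2 < n + 3 by omega)]
  change (if x - v = 1 then 1 else 0) + (if v - x = 1 then 1 else 0) = 1
  have hsum : (x - v) + (v - x) = 0 := by ring
  rcases cycleGraph_adj.1 hx with h | h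
  · rw [if_pos h, if_neg fun h' => h2 (by rwa [h, h'] at hsum)]
  · rw [if_neg fun h' => h2 (by rwa [h, h'] at hsum), if_pos h]

def rubblingPotential (v : Fin (n + 3)) (p : Fin (n + 3) → ℕ) : ℕ :=
  2 * p v + arcWeightSum (cycleGraph.subRight v) p / 2 ^ (n + 2) +
    arcWeightSum (cycleGraph.subLeft v) p / 2 ^ (n + 2)

theorem rubblingPotential_le_of_step (h : RubblingStep (cycleGraph (n + 3)) p p') :
    rubblingPotential v p' ≤ rubblingPotential v p := by
  obtain ⟨x, y, u, hx, hy, hmove⟩ := h.exists_move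
  have hM : 0 < 2 ^ (n + 2) := by positivity
  have hv := hmove v
  unfold rubblingPotential
  by_cases hu : u = v
  · subst hu
    have hR := Nat.div_add_le_div_of_add_mul_le hM
      (arcWeightSum_add_le_of_move_to (e := cycleGraph.subRight u) (sub_self u) hmove)
    have hL := Nat.div_add_le_div_of_add_mul_le hM
      (arcWeightSum_add_le_of_move_to (e := cycleGraph.subLeft u) (sub_self u) hmove)
    have hx' := indicator_subRight_add_indicator_subLeft hx
    have hy' := indicator_subRight_add_indicator_subLeft hy
    rw [if_neg hx.ne', if_neg hy.ne', if_pos rfl] at hv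
    omega
  · have hR := Nat.div_le_div_add_of_le_add_mul hM
      (arcWeightSum_le_of_move_away (e := cycleGraph.subRight v) (sub_self v) hx hy hmove)
    have hL := Nat.div_le_div_add_of_le_add_mul hM
      (arcWeightSum_le_of_move_away (e := cycleGraph.subLeft v) (sub_self v) hx hy hmove)
    simp only [if_neg (Ne.symm hu)] at hv
    omega

theorem rubblingPotential_le_of_reach (h : RubblingReach (cycleGraph (n + 3)) p p') :
    rubblingPotential v p' ≤ rubblingPotential v p := by
  induction h with
  | refl => exact le_rfl
  | tail _ hstep ih => exact (rubblingPotential_le_of_step hstep).trans ih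

theorem four_le_rubblingPotential (h : 2 ≤ p v) : 4 ≤ rubblingPotential v p :=
  ((Nat.mul_le_mul_left 2 h).trans (Nat.le_add_right _ _)).trans (Nat.le_add_right _ _)

end Potential

section GeomWeight

variable {L : ℕ} {c : ℕ → ℕ}

def geomWeight (L : ℕ) (c : ℕ → ℕ) : ℕ := ∑ i ∈ range L, c i * 2 ^ (L - i)

def leadingTwos (L : ℕ) (c : ℕ → ℕ) : Finset ℕ :=
  (range L).filter fun i => c i = 2 ∧ ∀ j < i, c j ≠ 0

theorem geomWeight_succ :
    geomWeight (L + 1) c = c 0 * 2 ^ (L + 1) + geomWeight L fun i => c (i + 1) := by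
  rw [geomWeight, sum_range_succ', add_comm, geomWeight]
  simp

theorem geomWeight_add_four_le (hc : ∀ i, c i ≤ 2) : geomWeight L c + 4 ≤ 4 * 2 ^ L := by
  induction L generalizing c with
  | zero => simp [geomWeight]
  | succ L ih =>
    have := ih fun i => hc (i + 1)
    have := Nat.mul_le_mul_right (2 ^ L * 2) (hc 0)
    rw [geomWeight_succ, pow_succ]
    omega

theorem leadingTwos_succ_of_eq_zero (h : c 0 = 0) : leadingTwos (L + 1) c = ∅ := by
  refine filter_eq_empty_iff.2 fun i _ ⟨hi, hpre⟩ => ?_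
  rcases Nat.eq_zero_or_pos i with rfl | hpos
  · omega
  · exact hpre 0 hpos h

theorem card_leadingTwos_succ (h : c 0 ≠ 0) :
    #(leadingTwos (L + 1) c) =
      (if c 0 = 2 then 1 else 0) + #(leadingTwos L fun i => c (i + 1)) := by
  have hshift : ∀ i, (∀ j < i + 1, c j ≠ 0) ↔ ∀ j < i, c (j + 1) ≠ 0 := fun i =>
    ⟨fun H j hj => H (j + 1) (by omega), fun H j hj => by
      rcases j with _ | j
      · exact h
      · exact H j (by omega)⟩
  have htail : #(((range L).map ⟨(· + 1), add_left_injective 1⟩).filter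
      fun i => c i = 2 ∧ ∀ j < i, c j ≠ 0) = #(leadingTwos L fun i => c (i + 1)) := by
    rw [filter_map, card_map]
    exact congrArg card (filter_congr fun i _ => and_congr_right fun _ => hshift i)
  rw [leadingTwos, range_add_one', filter_insert]
  split_ifs with h2 h2' h2'
  · rw [card_insert_of_notMem (by simp), htail, add_comm]
  · exact absurd h2.1 h2'
  · exact absurd ⟨h2', by simp⟩ h2
  · rw [htail, zero_add]

theorem geomWeight_lt (hc : ∀ i, c i ≤ 2) :
    geomWeight L c < (2 + #(leadingTwos L c)) * 2 ^ L := by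
  induction L generalizing c with
  | zero => simp [geomWeight]
  | succ L ih =>
    have ih' := ih fun i => hc (i + 1)
    rw [geomWeight_succ, pow_succ]
    by_cases h0 : c 0 = 0
    · have := geomWeight_add_four_le (L := L) fun i => hc (i + 1)
      rw [leadingTwos_succ_of_eq_zero h0, h0]
      simp only [card_empty]
      omega
    · rw [card_leadingTwos_succ h0]
      have : c 0 = 1 ∨ c 0 = 2 := by have := hc 0; omega
      have ht := Nat.zero_le (#(leadingTwos L fun i => c (i + 1)) * 2 ^ L)
      rcases this with h | h
      · rw [if_neg (by omega), h]
        nlinarith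
      · rw [if_pos h, h]
        nlinarith

end GeomWeight

section Arcs

open Classical in
noncomputable def twoFriends {V : Type*} [Fintype V] (G : SimpleGraph V) (q : V → ℕ) (v : V) :
    Finset V :=
  univ.filter fun w => Friends G q v w ∧ q w = 2

theorem mem_twoFriends {V : Type*} [Fintype V] {G : SimpleGraph V} {q : V → ℕ} {v w : V} :
    w ∈ twoFriends G q v ↔ Friends G q v w ∧ q w = 2 := by
  simp [twoFriends]

variable {n : ℕ} {e : cycleGraph (n + 3) ≃g cycleGraph (n + 3)} {q : Fin (n + 3) → ℕ}
  {v : Fin (n + 3)}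

/-- `arcSeq e q i` is the number of pebbles at distance `i + 1` from `e.symm 0`. -/
def arcSeq (e : cycleGraph (n + 3) ≃g cycleGraph (n + 3)) (q : Fin (n + 3) → ℕ) (i : ℕ) :
    ℕ :=
  q (e.symm ((i + 1 : ℕ) : Fin (n + 3)))

theorem sum_eq_add_sum_arcSeq (e : cycleGraph (n + 3) ≃g cycleGraph (n + 3)) :
    ∑ u, q u = q (e.symm 0) + ∑ i ∈ range (n + 2), arcSeq e q i := by
  rw [← e.symm.toEquiv.sum_comp]
  exact sum_fin_succ_eq_add_sum_range fun i => q (e.symm i)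

theorem arcWeightSum_eq_geomWeight : arcWeightSum e q = geomWeight (n + 2) (arcSeq e q) := by
  rw [arcWeightSum, Fintype.sum_equiv e.toEquiv _ (fun i => q (e.symm i) * arcWeight i)
    fun u => by simp, sum_fin_succ_eq_add_sum_range, arcWeight_zero, mul_zero, zero_add,
    geomWeight]
  exact sum_congr rfl fun i hi => by rw [arcSeq, arcWeight_natCast_succ (mem_range.1 hi)]

theorem arcWeightSum_div_le (hq : ∀ u, q u ≤ 2) :
    arcWeightSum e q / 2 ^ (n + 2) ≤ 1 + #(leadingTwos (n + 2) (arcSeq e q)) := by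
  have := geomWeight_lt (L := n + 2) (c := arcSeq e q) fun i => hq _
  rw [← arcWeightSum_eq_geomWeight] at this
  have := (Nat.div_lt_iff_lt_mul (by positivity)).2 this
  omega

theorem friends_of_mem_leadingTwos (he : e v = 0) {i : ℕ}
    (hi : i ∈ leadingTwos (n + 2) (arcSeq e q)) :
    Friends (cycleGraph (n + 3)) q v (e.symm ((i + 1 : ℕ) : Fin (n + 3))) := by
  obtain ⟨hiL, -, hpre⟩ := mem_filter.1 hi
  have hv : e.symm ((0 : ℕ) : Fin (n + 3)) = v := by simp [← he]
  obtain ⟨W, hW⟩ := exists_walk_of_chain (G := cycleGraph (n + 3))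
    (fun j => e.symm (j : Fin (n + 3))) (i + 1)
    fun j _ => e.symm.map_adj_iff.2 (cycleGraph.adj_natCast_succ j)
  refine friends_of_walk (fun h => Fin.natCast_succ_ne_zero (mem_range.1 hiL) ?_)
    (W.copy hv rfl) fun u hu huv huw => ?_
  · simpa [← he] using congrArg e h.symm
  obtain ⟨j, hj, rfl⟩ := hW u (by simpa using hu)
  rcases j with _ | j
  · exact absurd hv huv
  · exact Nat.one_le_iff_ne_zero.2 (hpre j (by grind))

theorem mem_twoFriends_of_mem_leadingTwos (he : e v = 0) {i : ℕ}
    (hi : i ∈ leadingTwos (n + 2) (arcSeq e q)) :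
    e.symm ((i + 1 : ℕ) : Fin (n + 3)) ∈ twoFriends (cycleGraph (n + 3)) q v :=
  mem_twoFriends.2 ⟨friends_of_mem_leadingTwos he hi, (mem_filter.1 hi).2.1⟩

theorem card_leadingTwos_le (he : e v = 0) :
    #(leadingTwos (n + 2) (arcSeq e q)) ≤ #(twoFriends (cycleGraph (n + 3)) q v) := by
  refine card_le_card_of_injOn _ (fun i hi => mem_twoFriends_of_mem_leadingTwos he hi) ?_
  intro i hi j hj hij
  have := congrArg Fin.val (e.symm.injective hij)
  rw [Fin.val_natCast, Fin.val_natCast, Nat.mod_eq_of_lt, Nat.mod_eq_of_lt] at this <;>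
    grind [leadingTwos]

theorem subRight_symm_eq_subLeft_symm_iff {a b : ℕ} :
    (cycleGraph.subRight v).symm (a : Fin (n + 3)) = (cycleGraph.subLeft v).symm (b : Fin (n + 3))
      ↔ n + 3 ∣ a + b := by
  rw [cycleGraph.subRight_symm_apply, cycleGraph.subLeft_symm_apply, ← sub_eq_zero,
    ← Fin.natCast_eq_zero (a := a + b)]
  push_cast
  constructor <;> intro h <;> linear_combination h

theorem add_three_le_sum_of_leadingTwos {i j : ℕ}
    (hi : i ∈ leadingTwos (n + 2) (arcSeq (cycleGraph.subRight v) q))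
    (hj : j ∈ leadingTwos (n + 2) (arcSeq (cycleGraph.subLeft v) q))
    (hij : (cycleGraph.subRight v).symm ((i + 1 : ℕ) : Fin (n + 3)) =
      (cycleGraph.subLeft v).symm ((j + 1 : ℕ) : Fin (n + 3))) :
    n + 3 ≤ ∑ u, q u := by
  obtain ⟨hiL, hi2, hipre⟩ := mem_filter.1 hi
  obtain ⟨hjL, -, hjpre⟩ := mem_filter.1 hj
  rw [mem_range] at hiL hjL
  have hsum : i + j + 2 = n + 3 := by
    have := Nat.eq_of_dvd_of_lt_two_mul (by omega) (subRight_symm_eq_subLeft_symm_iff.1 hij)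
      (by omega)
    omega
  have hocc : ∀ d ∈ range (n + 2), 1 + (if d = i then 1 else 0) ≤
      arcSeq (cycleGraph.subRight v) q d := by
    intro d hd
    rw [mem_range] at hd
    rcases lt_trichotomy d i with hdi | rfl | hdi
    · rw [if_neg hdi.ne]
      exact Nat.one_le_iff_ne_zero.2 (hipre d hdi)
    · rw [if_pos rfl, hi2]
    · have : arcSeq (cycleGraph.subRight v) q d =
          arcSeq (cycleGraph.subLeft v) q (n + 1 - d) := by
        rw [arcSeq, arcSeq,
          (subRight_symm_eq_subLeft_symm_iff (a := d + 1) (b := n + 1 - d + 1)).2 ⟨1, by omega⟩]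
      rw [if_neg hdi.ne', this]
      exact Nat.one_le_iff_ne_zero.2 (hjpre (n + 1 - d) (by omega))
  have := sum_le_sum hocc
  rw [sum_add_distrib, sum_ite_eq', if_pos (mem_range.2 hiL)] at this
  rw [sum_eq_add_sum_arcSeq (cycleGraph.subRight v)]
  simp only [sum_const, card_range, smul_eq_mul, mul_one] at this
  omega

end Arcs

theorem one_lt_card_twoFriends {n : ℕ} {q : Fin (n + 3) → ℕ} {v : Fin (n + 3)} (hv : q v = 0)
    (hsize : ∑ u, q u = n + 2) (hle : ∀ u, q u ≤ 2) (hpot : 4 ≤ rubblingPotential v q) :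
    1 < #(twoFriends (cycleGraph (n + 3)) q v) := by
  have hR := arcWeightSum_div_le (e := cycleGraph.subRight v) hle
  have hL := arcWeightSum_div_le (e := cycleGraph.subLeft v) hle
  have hR' := card_leadingTwos_le (q := q) (e := cycleGraph.subRight v) (sub_self v)
  have hL' := card_leadingTwos_le (q := q) (e := cycleGraph.subLeft v) (sub_self v)
  unfold rubblingPotential at hpot
  by_contra! hF
  obtain ⟨i, hi⟩ := card_pos.1 (show 0 < #(leadingTwos (n + 2) (arcSeq (cycleGraph.subRight v) q))
    by omega)
  obtain ⟨j, hj⟩ := card_pos.1 (show 0 < #(leadingTwos (n + 2) (arcSeq (cycleGraph.subLeft v) q))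
    by omega)
  have := add_three_le_sum_of_leadingTwos hi hj <| card_le_one.1 hF _
    (mem_twoFriends_of_mem_leadingTwos (sub_self v) hi) _
    (mem_twoFriends_of_mem_leadingTwos (sub_self v) hj)
  omega

/-- In a 2-solvable distribution of size `n - 1` on the cycle `C_n` with at most two
pebbles on each vertex, every unoccupied vertex has two distinct friends, each of which
carries exactly two pebbles. -/
theorem unoccupied_has_two_friends (n : ℕ) (hn : 3 ≤ n) (q : Fin n → ℕ)
    (hsolv : ∀ u, KReachable (cycleGraph n) q u 2)
    (hsize : ∑ v, q v = n - 1) (hle : ∀ u, q u ≤ 2) :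
    ∀ v, q v = 0 → ∃ a b, a ≠ b ∧ Friends (cycleGraph n) q v a ∧
      Friends (cycleGraph n) q v b ∧ q a = 2 ∧ q b = 2 := by
  obtain ⟨m, rfl⟩ : ∃ m, n = m + 3 := ⟨n - 3, by omega⟩
  intro v hv
  obtain ⟨r, hr, hrv⟩ := hsolv v
  have hpot : 4 ≤ rubblingPotential v q :=
    (four_le_rubblingPotential hrv).trans (rubblingPotential_le_of_reach hr)
  obtain ⟨a, b, ha, hb, hab⟩ :=
    one_lt_card_iff.1 (one_lt_card_twoFriends hv (by omega) hle hpot)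
  rw [mem_twoFriends] at ha hb
  exact ⟨a, b, hab, ha.1, hb.1, ha.2, hb.2⟩
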